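/- For positive semidefinite Hermitian M×M matrices A and B, det(I + A + B) ≤ det(I + A)·det(I + B). -/

import Mathlib

open Matrix
open scoped ComplexOrder

namespace Matrix.PosSemidef
open scoped MatrixOrder

noncomputable def sqrt {n : ℕ} {A : Matrix (Fin n) (Fin n) ℂ} (_hA : A.PosSemidef) :
    Matrix (Fin n) (Fin n) ℂ := CFC.sqrt A

lemma sqrt_mul_self {n : ℕ} {A : Matrix (Fin n) (Fin n) ℂ} (hA : A.PosSemidef) :
    hA.sqrt * hA.sqrt = A := CFC.sqrt_mul_sqrt_self A hA.nonneg

lemma posSemidef_sqrt {n : ℕ} {A : Matrix (Fin n) (Fin n) ℂ} (hA : A.PosSemidef) :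
    hA.sqrt.PosSemidef := (CFC.sqrt_nonneg A).posSemidef

end Matrix.PosSemidef

/-- det of 1 + PSD is a real number ≥ 1. -/
lemma aux_det_one_add_psd {n : ℕ} {Z : Matrix (Fin n) (Fin n) ℂ} (hZ : Z.PosSemidef) :
    ∃ r : ℝ, 1 ≤ r ∧ (1 + Z : Matrix (Fin n) (Fin n) ℂ).det = (r : ℂ) := by
  have hU := (Matrix.mem_unitaryGroup_iff).mp (hZ.1.eigenvectorUnitary).2
  have key : (1 + Z : Matrix (Fin n) (Fin n) ℂ)
      = (hZ.1.eigenvectorUnitary : Matrix (Fin n) (Fin n) ℂ)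
        * (1 + diagonal (RCLike.ofReal ∘ hZ.1.eigenvalues))
        * (star (hZ.1.eigenvectorUnitary : Matrix (Fin n) (Fin n) ℂ)) := by
    rw [Matrix.mul_add, Matrix.add_mul, Matrix.mul_one, hU, ← (hZ.1.spectral_theorem.trans (Unitary.conjStarAlgAut_apply _ _))]
  refine ⟨∏ i, (1 + hZ.1.eigenvalues i), ?_, ?_⟩
  ·     calc (1:ℝ) = ∏ _i : Fin n, 1 := by simp
    _ ≤ ∏ i, (1 + hZ.1.eigenvalues i) :=
      Finset.prod_le_prod (by simp) fun i _ => by linarith [hZ.eigenvalues_nonneg i]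
  · rw [key, det_mul_right_comm, hU, one_mul, ← Matrix.diagonal_one, diagonal_add,
      det_diagonal]
    push_cast
    simp [Function.comp]

/-- `det (C + B) = det C * det (1 + √B * C⁻¹ * √B)` for `C` posdef, `B` PSD. -/
lemma aux_det_add {n : ℕ} {C B : Matrix (Fin n) (Fin n) ℂ} (hC : C.PosDef) (hB : B.PosSemidef) :
    (C + B).det = C.det * (1 + hB.sqrt * C⁻¹ * hB.sqrt).det := by
  have hCu : IsUnit C.det := (Matrix.isUnit_iff_isUnit_det _).mp hC.isUnit
  have h1 : C + B = C * (1 + C⁻¹ * B) := by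
    rw [Matrix.mul_add, Matrix.mul_one, ← Matrix.mul_assoc, Matrix.mul_nonsing_inv _ hCu,
      Matrix.one_mul]
  rw [h1, det_mul]
  congr 1
  conv_lhs => rw [← hB.sqrt_mul_self, ← Matrix.mul_assoc]
  rw [det_one_add_mul_comm, ← Matrix.mul_assoc]

/-- For `C = 1 + A` with `A` PSD, the matrix `B - √B * C⁻¹ * √B` is PSD. -/
lemma aux_residual_psd {n : ℕ} {A B : Matrix (Fin n) (Fin n) ℂ}
    (hA : A.PosSemidef) (hB : B.PosSemidef)
    (hC : (1 + A : Matrix (Fin n) (Fin n) ℂ).PosDef) :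
    (B - hB.sqrt * (1 + A)⁻¹ * hB.sqrt).PosSemidef := by
  set C : Matrix (Fin n) (Fin n) ℂ := 1 + A with hCdef
  set R : Matrix (Fin n) (Fin n) ℂ := hC.inv.posSemidef.sqrt with hRdef
  have hRR : R * R = C⁻¹ := hC.inv.posSemidef.sqrt_mul_self
  have hRH : Rᴴ = R := hC.inv.posSemidef.posSemidef_sqrt.1
  -- R is invertible
  have hRdet : IsUnit R.det := by
    have h2 : R.det * R.det = (C⁻¹).det := by rw [← det_mul, hRR]
    have h3 : (C⁻¹).det ≠ 0 := hC.inv.det_pos.ne'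
    exact isUnit_iff_ne_zero.mpr (fun h => h3 (by rw [← h2, h, mul_zero]))
  -- R * C * R = 1
  have hRCR : R * C * R = 1 := by
    have h1 : R * C * R * R = R := by
      rw [Matrix.mul_assoc (R * C), hRR, Matrix.mul_assoc, Matrix.mul_nonsing_inv _
        ((Matrix.isUnit_iff_isUnit_det _).mp hC.isUnit), Matrix.mul_one]
    have := congrArg (fun X => X * R⁻¹) h1
    simpa [Matrix.mul_assoc, Matrix.mul_nonsing_inv _ hRdet] using this
  -- 1 - C⁻¹ = R * A * R
  have hkey : (1 : Matrix (Fin n) (Fin n) ℂ) - C⁻¹ = R * A * R := by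
    have : R * A * R = R * C * R - R * 1 * R := by
      rw [hCdef]
      noncomm_ring
    rw [this, hRCR, Matrix.mul_one, hRR]
  have hfact : B - hB.sqrt * C⁻¹ * hB.sqrt
      = (hB.sqrt * R) * A * (hB.sqrt * R)ᴴ := by
    rw [conjTranspose_mul, hRH, hB.posSemidef_sqrt.1]
    have : B - hB.sqrt * C⁻¹ * hB.sqrt = hB.sqrt * (1 - C⁻¹) * hB.sqrt := by
      rw [Matrix.mul_sub, Matrix.sub_mul, Matrix.mul_one, hB.sqrt_mul_self]
    rw [this, hkey]
    noncomm_ring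
  rw [hfact]
  exact hA.mul_mul_conjTranspose_same _

/-- For positive semidefinite Hermitian matrices `A, B`:
`det(I + A + B) ≤ det(I + A) · det(I + B)`. -/
theorem det_one_add_add_le {M : ℕ} (A B : Matrix (Fin M) (Fin M) ℂ)
    (hA : A.PosSemidef) (hB : B.PosSemidef) :
    ((1 + A + B : Matrix (Fin M) (Fin M) ℂ).det).re ≤
      ((1 + A : Matrix (Fin M) (Fin M) ℂ).det).re *
        ((1 + B : Matrix (Fin M) (Fin M) ℂ).det).re := by
  have hC : (1 + A : Matrix (Fin M) (Fin M) ℂ).PosDef :=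
    Matrix.PosDef.add_posSemidef Matrix.PosDef.one hA
  have hW : (hB.sqrt * (1 + A)⁻¹ * hB.sqrt).PosSemidef := by
    have := hC.inv.posSemidef.mul_mul_conjTranspose_same hB.sqrt
    rwa [hB.posSemidef_sqrt.1] at this
  have hP : (B - hB.sqrt * (1 + A)⁻¹ * hB.sqrt).PosSemidef := aux_residual_psd hA hB hC
  have hQ : (1 + hB.sqrt * (1 + A)⁻¹ * hB.sqrt : Matrix (Fin M) (Fin M) ℂ).PosDef :=
    Matrix.PosDef.add_posSemidef Matrix.PosDef.one hW
  have hZ2 : (hP.sqrt * (1 + hB.sqrt * (1 + A)⁻¹ * hB.sqrt)⁻¹ * hP.sqrt).PosSemidef := by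
    have := hQ.inv.posSemidef.mul_mul_conjTranspose_same hP.sqrt
    rwa [hP.posSemidef_sqrt.1] at this
  obtain ⟨t, ht, hdt⟩ := aux_det_one_add_psd hA
  obtain ⟨s, hs, hds⟩ := aux_det_one_add_psd hW
  obtain ⟨r, hr, hdr⟩ := aux_det_one_add_psd hZ2
  have hL : (1 + A + B : Matrix (Fin M) (Fin M) ℂ).det = (↑(t * s) : ℂ) := by
    rw [aux_det_add hC hB, hdt, hds]; push_cast; ring
  have hR : (1 + B : Matrix (Fin M) (Fin M) ℂ).det = (↑(s * r) : ℂ) := by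
    have h1 : (1 + B : Matrix (Fin M) (Fin M) ℂ)
        = (1 + hB.sqrt * (1 + A)⁻¹ * hB.sqrt) + (B - hB.sqrt * (1 + A)⁻¹ * hB.sqrt) := by
      noncomm_ring
    rw [h1, aux_det_add hQ hP, hds, hdr]; push_cast; ring
  rw [hL, hR, hdt]
  simp only [Complex.ofReal_re]
  have h1 : t * s * 1 ≤ t * s * r :=
    mul_le_mul_of_nonneg_left hr (by nlinarith : (0:ℝ) ≤ t * s)
  nlinarith
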